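/- arXiv:2104.00637 — 3 statements merged into one kernel-verified Lean document; each statement's English description precedes it below -/
import Mathlib

section
/- Let Ω ⊆ ℝ^d be open, let u : Ω → ℝ be a convex C² function whose gradient map ∇u is injective on Ω, and let f, g : ℝ^d → ℝ be nonnegative measurable density functions with g(∇u(x)) > 0 for a.e. x ∈ Ω. If the map ∇u pushes the measure f·(Lebesgue restricted to Ω) forward to the measure g·Lebesgue, then for Lebesgue-almost every x ∈ Ω the Monge–Ampère equation holds: det D²u(x) = f(x) / g(∇u(x)), where D²u(x) is the Hessian matrix of u at x. -/
open MeasureTheory Set Filter Topology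
open scoped RealInnerProductSpace ENNReal

/-! Since `∇u` is injective and pushes `f·λ|Ω` forward to `g·λ`, the change of variables formula
for `∇u` gives `|det D²u| · (g ∘ ∇u) = f` almost everywhere on `Ω`. Convexity makes
`t ↦ ⟪∇u(x + t v), v⟫` monotone, so `⟪D²u(x) v, v⟫ ≥ 0`; along the segment from `id` to `D²u(x)`
every operator `(1 - t) • id + t • D²u(x)` with `t < 1` is then injective, so the determinant
cannot cross zero and `det D²u(x) ≥ 0`. Dropping the absolute value and dividing by
`g (∇u x) > 0` gives the equation. -/

namespace ContinuousLinearMap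

variable {E : Type*} [NormedAddCommGroup E] [InnerProductSpace ℝ E] [FiniteDimensional ℝ E]

theorem det_ne_zero_of_inner_self_pos (A : E →L[ℝ] E) (hA : ∀ v ≠ 0, 0 < ⟪A v, v⟫) :
    A.det ≠ 0 := by
  intro hdet
  obtain ⟨v, hv, hv0⟩ := Submodule.exists_mem_ne_zero_of_ne_bot
    (LinearMap.det_eq_zero_iff_ker_ne_bot.1 hdet)
  have : A v = 0 := hv
  simpa [this] using hA v hv0

theorem det_nonneg_of_inner_self_nonneg (A : E →L[ℝ] E) (hA : ∀ v, 0 ≤ ⟪A v, v⟫) :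
    0 ≤ A.det := by
  by_contra! hneg
  set B : ℝ → E →L[ℝ] E := fun t => (1 - t) • ContinuousLinearMap.id ℝ E + t • A
  have hB : ContinuousOn (fun t => (B t).det) (Icc 0 1) :=
    (continuous_det.comp (by fun_prop)).continuousOn
  obtain ⟨t, ⟨ht0, ht1⟩, hBt⟩ := intermediate_value_Icc' zero_le_one hB
    (show (0 : ℝ) ∈ Icc (B 1).det (B 0).det by simp [B, hneg.le, ContinuousLinearMap.det])
  rcases ht1.lt_or_eq with ht1 | rfl
  · refine (B t).det_ne_zero_of_inner_self_pos (fun v hv => ?_) hBt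
    have : ⟪B t v, v⟫ = (1 - t) * ‖v‖ ^ 2 + t * ⟪A v, v⟫ := by
      simp [B, inner_add_left, inner_smul_left]
    rw [this]
    have h1t : 0 < 1 - t := sub_pos.2 ht1
    have := hA v
    positivity
  · exact hneg.ne (by simpa [B] using hBt)

end ContinuousLinearMap

section Gradient

variable {E : Type*} [NormedAddCommGroup E] [InnerProductSpace ℝ E] [CompleteSpace E]

theorem ContDiffOn.contDiffOn_gradient {u : E → ℝ} {s : Set E} {m n : WithTop ℕ∞}
    (hu : ContDiffOn ℝ n u s) (hs : IsOpen s) (hmn : m + 1 ≤ n) :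
    ContDiffOn ℝ m (gradient u) s :=
  (InnerProductSpace.toDual ℝ E).symm.contDiff.comp_contDiffOn (hu.fderiv_of_isOpen hs hmn)

theorem ConvexOn.inner_fderiv_gradient_apply_self_nonneg {u : E → ℝ} {s : Set E} {x : E}
    {A : E →L[ℝ] E} (hconv : ConvexOn ℝ s u) (hs : IsOpen s) (hu : DifferentiableOn ℝ u s)
    (hx : x ∈ s) (hA : HasFDerivAt (gradient u) A x) (v : E) : 0 ≤ ⟪A v, v⟫ := by
  set L : ℝ →ᵃ[ℝ] E := AffineMap.lineMap x (x + v)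
  have hL0 : L 0 = x := AffineMap.lineMap_apply_zero _ _
  have hLd (t : ℝ) : HasDerivAt L v t := by
    simpa using AffineMap.hasDerivAt_lineMap (a := x) (b := x + v) (x := t)
  set S := L ⁻¹' s
  have hS : S ∈ 𝓝 0 := AffineMap.lineMap_continuous.continuousAt.preimage_mem_nhds
    (by rw [hL0]; exact hs.mem_nhds hx)
  have hφ : ∀ t ∈ S, HasDerivAt (u ∘ L) ⟪gradient u (L t), v⟫ t := fun t ht => by
    rw [inner_gradient_left]
    exact ((hu _ ht).differentiableAt (hs.mem_nhds ht)).hasFDerivAt.comp_hasDerivAt t (hLd t)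
  have hmono : MonotoneOn (fun t => ⟪gradient u (L t), v⟫) S :=
    ((hconv.comp_affineMap L).monotoneOn_deriv fun t ht => (hφ t ht).differentiableAt).congr
      fun t ht => (hφ t ht).deriv
  have hψ : HasDerivAt (fun t => ⟪gradient u (L t), v⟫) ⟪A v, v⟫ 0 := by
    rw [← hL0] at hA
    simpa [Function.comp_def] using (hA.comp_hasDerivAt 0 (hLd 0)).inner ℝ (hasDerivAt_const 0 v)
  have hacc : AccPt (0 : ℝ) (𝓟 S) :=
    ((PerfectSpace.univ_preperfect 0 (mem_univ _)).nhds_inter hS).mono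
      (principal_mono.2 inter_subset_left)
  exact hψ.hasDerivWithinAt.nonneg_of_monotoneOn hacc hmono

end Gradient

section ChangeOfVariables

variable {E : Type*} [NormedAddCommGroup E] [NormedSpace ℝ E] [FiniteDimensional ℝ E]
  [MeasurableSpace E] [BorelSpace E] (μ : Measure E) [μ.IsAddHaarMeasure]
  {s : Set E} {T : E → E} {T' : E → E →L[ℝ] E} {f g : E → ℝ≥0∞}

theorem setLIntegral_abs_det_fderiv_mul_comp_eq_of_map_withDensity (hs : MeasurableSet s)
    (hT' : ∀ x ∈ s, HasFDerivWithinAt T (T' x) s x) (hT : InjOn T s)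
    (hmap : Measure.map T ((μ.restrict s).withDensity f) = μ.withDensity g)
    {t : Set E} (ht : MeasurableSet t) (hts : t ⊆ s) :
    ∫⁻ x in t, ENNReal.ofReal |(T' x).det| * g (T x) ∂μ = ∫⁻ x in t, f x ∂μ := by
  have hTt : MeasurableSet (T '' t) :=
    measurable_image_of_fderivWithin ht (fun x hx => (hT' x (hts hx)).mono hts) (hT.mono hts)
  have hTmeas : AEMeasurable T ((μ.restrict s).withDensity f) :=
    (ContinuousOn.aemeasurable (fun x hx => (hT' x hx).continuousWithinAt) hs).mono'
      (withDensity_absolutelyContinuous _ _)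
  have hpre : T ⁻¹' (T '' t) ∩ s = t := by
    refine (subset_inter (subset_preimage_image T t) hts).antisymm' ?_
    rintro x ⟨⟨y, hy, hyx⟩, hx⟩
    rwa [← hT (hts hy) hx hyx]
  rw [← lintegral_image_eq_lintegral_abs_det_fderiv_mul μ ht
      (fun x hx => (hT' x (hts hx)).mono hts) (hT.mono hts), ← withDensity_apply _ hTt, ← hmap,
    Measure.map_apply_of_aemeasurable hTmeas hTt, ← restrict_withDensity hs,
    Measure.restrict_apply' hs, hpre, withDensity_apply _ ht]

theorem ae_abs_det_fderiv_mul_comp_eq_of_map_withDensity (hs : MeasurableSet s)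
    (hT' : ∀ x ∈ s, HasFDerivWithinAt T (T' x) s x) (hT : InjOn T s)
    (hf : AEMeasurable f (μ.restrict s)) (hg : Measurable g)
    (hmap : Measure.map T ((μ.restrict s).withDensity f) = μ.withDensity g) :
    ∀ᵐ x ∂μ.restrict s, ENNReal.ofReal |(T' x).det| * g (T x) = f x := by
  have hTmeas : AEMeasurable T (μ.restrict s) :=
    ContinuousOn.aemeasurable (fun x hx => (hT' x hx).continuousWithinAt) hs
  refine ae_eq_of_forall_setLIntegral_eq_of_sigmaFinite₀
    ((aemeasurable_ofReal_abs_det_fderivWithin μ hs hT').mul (hg.comp_aemeasurable hTmeas)) hf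
    fun t ht _ => ?_
  rw [Measure.restrict_restrict ht]
  exact setLIntegral_abs_det_fderiv_mul_comp_eq_of_map_withDensity μ hs hT' hT hmap
    (ht.inter hs) inter_subset_right

end ChangeOfVariables

theorem stmt_5_general {d : ℕ} (Ω : Set (EuclideanSpace ℝ (Fin d)))
    (hΩ : IsOpen Ω)
    (u : EuclideanSpace ℝ (Fin d) → ℝ)
    (hconv : ConvexOn ℝ Ω u)
    (hC2 : ContDiffOn ℝ 2 u Ω)
    (hinj : Set.InjOn (gradient u) Ω)
    (f g : EuclideanSpace ℝ (Fin d) → ℝ)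
    (hfm : Measurable f) (hgm : Measurable g)
    (hf0 : ∀ x, 0 ≤ f x)
    (hgpos : ∀ᵐ x ∂(volume.restrict Ω), 0 < g (gradient u x))
    (hpush : Measure.map (gradient u)
        ((volume.restrict Ω).withDensity (fun x => ENNReal.ofReal (f x))) =
      volume.withDensity (fun y => ENNReal.ofReal (g y))) :
    ∀ᵐ x ∂(volume.restrict Ω),
      LinearMap.det (fderiv ℝ (gradient u) x).toLinearMap = f x / g (gradient u x) := by
  have hD2u : ∀ x ∈ Ω, HasFDerivAt (gradient u) (fderiv ℝ (gradient u) x) x := fun x hx =>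
    (((hC2.contDiffOn_gradient hΩ (by norm_num)).differentiableOn one_ne_zero).differentiableAt
      (hΩ.mem_nhds hx)).hasFDerivAt
  have hjac := ae_abs_det_fderiv_mul_comp_eq_of_map_withDensity volume hΩ.measurableSet
    (fun x hx => (hD2u x hx).hasFDerivWithinAt) hinj hfm.ennreal_ofReal.aemeasurable
    hgm.ennreal_ofReal hpush
  filter_upwards [hjac, hgpos, ae_restrict_mem hΩ.measurableSet] with x hx hgx hxΩ
  have hdet : 0 ≤ (fderiv ℝ (gradient u) x).det :=
    ContinuousLinearMap.det_nonneg_of_inner_self_nonneg _ fun v =>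
      hconv.inner_fderiv_gradient_apply_self_nonneg hΩ (hC2.differentiableOn two_ne_zero) hxΩ
        (hD2u x hxΩ) v
  rw [abs_of_nonneg hdet, ← ENNReal.ofReal_mul hdet,
    ENNReal.ofReal_eq_ofReal_iff (mul_nonneg hdet hgx.le) (hf0 x)] at hx
  exact (eq_div_iff hgx.ne').2 hx

theorem stmt_5 {d : ℕ} (Ω : Set (EuclideanSpace ℝ (Fin d)))
    (hΩ : IsOpen Ω)
    (u : EuclideanSpace ℝ (Fin d) → ℝ)
    (hconv : ConvexOn ℝ Ω u)
    (hC2 : ContDiffOn ℝ 2 u Ω)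
    (hinj : Set.InjOn (gradient u) Ω)
    (f g : EuclideanSpace ℝ (Fin d) → ℝ)
    (hfm : Measurable f) (hgm : Measurable g)
    (hf0 : ∀ x, 0 ≤ f x) (hg0 : ∀ y, 0 ≤ g y)
    (hgpos : ∀ᵐ x ∂(volume.restrict Ω), 0 < g (gradient u x))
    (hpush : Measure.map (gradient u)
        ((volume.restrict Ω).withDensity (fun x => ENNReal.ofReal (f x))) =
      volume.withDensity (fun y => ENNReal.ofReal (g y))) :
    ∀ᵐ x ∂(volume.restrict Ω),
      LinearMap.det (fderiv ℝ (gradient u) x).toLinearMap = f x / g (gradient u x) :=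
  stmt_5_general Ω hΩ u hconv hC2 hinj f g hfm hgm hf0 hgpos hpush
end

section
/- Optimality of the farthest power diagram map for the inner-product cost: let μ be a finite Borel measure on ℝ^d with finite first moment, let p₁, …, pₙ ∈ ℝ^d be pairwise distinct, ν₁, …, νₙ > 0, and suppose h ∈ ℝⁿ satisfies μ(Wᵢ(h)) = νᵢ for all i (where Wᵢ(h) is the farthest power cell) and the pairwise intersections Wᵢ(h) ∩ Wⱼ(h), i ≠ j, are μ-null. Let T_h : ℝ^d → ℝ^d be any measurable map with T_h(x) = pᵢ for all x in Wᵢ(h) ∖ ⋃_{j ≠ i} Wⱼ(h). Then for every measurable map T taking values in {p₁, …, pₙ} with μ(T⁻¹{pᵢ}) = νᵢ for all i, we have ∫ ⟪x, T_h(x)⟫ dμ(x) ≤ ∫ ⟪x, T(x)⟫ dμ(x). -/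
/-!
Kantorovich duality with the heights `h` as dual potential: for `x` in the cell `Wᵢ(h)` and any
`j`, `⟪x, pᵢ⟫ + hᵢ ≤ ⟪x, pⱼ⟫ + hⱼ`. Since `T_h` maps almost every point of `Wᵢ(h)` to `pᵢ`,
this gives `⟪x, T_h x⟫ + h(T_h x) ≤ ⟪x, T x⟫ + h(T x)` almost everywhere, and both height terms
integrate to `∑ νᵢ hᵢ` because the cells and the fibres `T⁻¹{pᵢ}` have the same masses.
-/

open MeasureTheory
open scoped RealInnerProductSpace

def farCell {d n : ℕ} (p : Fin n → EuclideanSpace ℝ (Fin d)) (h : Fin n → ℝ) (i : Fin n) :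
    Set (EuclideanSpace ℝ (Fin d)) :=
  {x | ∀ j, ⟪p i, x⟫ + h i ≤ ⟪p j, x⟫ + h j}

section

variable {X M ι : Type*}

theorem Finset.sum_indicator_const_of_mem_unique [Fintype ι] [AddCommMonoid M] {s : ι → Set X}
    (c : ι → M) {x : X} {i : ι} (hi : x ∈ s i) (hunique : ∀ j, x ∈ s j → j = i) :
    ∑ j, (s j).indicator (fun _ => c j) x = c i := by
  rw [Finset.sum_eq_single i (fun j _ hj => Set.indicator_of_notMem (mt (hunique j) hj) _)
    (by simp), Set.indicator_of_mem hi]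

variable [MeasurableSpace X] {μ : Measure X} {s : ι → Set X}

theorem integrable_sum_indicator_const [Fintype ι] (hs : ∀ i, MeasurableSet (s i))
    (hμs : ∀ i, μ (s i) ≠ ⊤) (c : ι → ℝ) :
    Integrable (fun x => ∑ i, (s i).indicator (fun _ => c i) x) μ :=
  integrable_finsetSum _ fun i _ => (integrableOn_const (hμs i)).integrable_indicator (hs i)

theorem integral_sum_indicator_const [Fintype ι] (hs : ∀ i, MeasurableSet (s i))
    (hμs : ∀ i, μ (s i) ≠ ⊤) (c : ι → ℝ) :
    ∫ x, ∑ i, (s i).indicator (fun _ => c i) x ∂μ = ∑ i, μ.real (s i) * c i := by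
  rw [integral_finsetSum _ fun i _ => (integrableOn_const (hμs i)).integrable_indicator (hs i)]
  simp only [integral_indicator_const _ (hs _), smul_eq_mul]

theorem ae_eq_of_mem_of_pairwise_aedisjoint [Countable ι]
    (hs : Pairwise fun i j => AEDisjoint μ (s i) (s j)) :
    ∀ᵐ x ∂μ, ∀ i j, x ∈ s i → x ∈ s j → i = j := by
  simp only [ae_all_iff]
  intro i j
  by_cases hij : i = j
  · exact ae_of_all _ fun _ _ _ => hij
  · refine measure_mono_null (fun x hx => ?_) (hs hij)
    by_contra hx'
    exact hx fun hi hj => (hx' ⟨hi, hj⟩).elim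

end

theorem MeasureTheory.Integrable.inner_of_ae_mem_range {E ι : Type*} [NormedAddCommGroup E]
    [InnerProductSpace ℝ E] [MeasurableSpace E] [OpensMeasurableSpace E]
    [SecondCountableTopology E] [Fintype ι] {μ : Measure E}
    (hμ1 : Integrable (fun x => ‖x‖) μ) (p : ι → E) {F : E → E} (hF : Measurable F)
    (hrange : ∀ᵐ x ∂μ, ∃ i, F x = p i) : Integrable (fun x => ⟪x, F x⟫) μ := by
  refine (hμ1.const_mul (∑ i, ‖p i‖)).mono' (measurable_id.inner hF).aestronglyMeasurable ?_
  filter_upwards [hrange] with x ⟨i, hi⟩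
  calc ‖⟪x, F x⟫‖ ≤ ‖x‖ * ‖p i‖ := hi ▸ norm_inner_le_norm _ _
    _ ≤ ‖x‖ * ∑ i, ‖p i‖ := by
      gcongr
      exact Finset.single_le_sum (f := fun i => ‖p i‖) (fun _ _ => norm_nonneg _)
        (Finset.mem_univ i)
    _ = (∑ i, ‖p i‖) * ‖x‖ := mul_comm _ _

section FarCell

variable {d n : ℕ} (p : Fin n → EuclideanSpace ℝ (Fin d)) (h : Fin n → ℝ)

theorem isClosed_farCell (i : Fin n) : IsClosed (farCell p h i) := by
  simp only [farCell, Set.ofPred_forall]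
  exact isClosed_iInter fun j => isClosed_le (by fun_prop) (by fun_prop)

theorem exists_mem_farCell [Nonempty (Fin n)] (x : EuclideanSpace ℝ (Fin d)) :
    ∃ i, x ∈ farCell p h i :=
  Finite.exists_min fun j => ⟪p j, x⟫ + h j

theorem ae_exists_mem_farCell_unique [Nonempty (Fin n)] {μ : Measure (EuclideanSpace ℝ (Fin d))}
    (hnull : ∀ i j, i ≠ j → μ (farCell p h i ∩ farCell p h j) = 0) :
    ∀ᵐ x ∂μ, ∃ i, x ∈ farCell p h i ∧ ∀ j, x ∈ farCell p h j → j = i := by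
  filter_upwards [ae_eq_of_mem_of_pairwise_aedisjoint fun i j => hnull i j] with x hx
  obtain ⟨i, hi⟩ := exists_mem_farCell p h x
  exact ⟨i, hi, fun j hj => hx j i hj hi⟩

theorem inner_add_le_of_mem_farCell {i : Fin n} {x : EuclideanSpace ℝ (Fin d)}
    (hx : x ∈ farCell p h i) (j : Fin n) : ⟪x, p i⟫ + h i ≤ ⟪x, p j⟫ + h j := by
  simpa only [real_inner_comm x] using hx j

end FarCell

theorem stmt_11_general {d n : ℕ}
    (μ : Measure (EuclideanSpace ℝ (Fin d)))
    (hμ1 : Integrable (fun x => ‖x‖) μ)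
    (p : Fin n → EuclideanSpace ℝ (Fin d)) (hp : Function.Injective p)
    (ν : Fin n → ℝ)
    (h : Fin n → ℝ)
    (hvol : ∀ i, μ (farCell p h i) = ENNReal.ofReal (ν i))
    (hnull : ∀ i j, i ≠ j → μ (farCell p h i ∩ farCell p h j) = 0)
    (Th : EuclideanSpace ℝ (Fin d) → EuclideanSpace ℝ (Fin d))
    (hThm : Measurable Th)
    (hTh : ∀ i, ∀ x ∈ farCell p h i \ ⋃ j ∈ ({i}ᶜ : Set (Fin n)), farCell p h j, Th x = p i) :
    ∀ T : EuclideanSpace ℝ (Fin d) → EuclideanSpace ℝ (Fin d),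
      Measurable T → (∀ x, ∃ i, T x = p i) →
      (∀ i, μ (T ⁻¹' {p i}) = ENNReal.ofReal (ν i)) →
      ∫ x, ⟪x, Th x⟫ ∂μ ≤ ∫ x, ⟪x, T x⟫ ∂μ := by
  intro T hTm hTr hTmass
  have : Nonempty (Fin n) := ⟨(hTr 0).choose⟩
  set W := farCell p h
  set S := fun i => T ⁻¹' {p i}
  have hWm i : MeasurableSet (W i) := (isClosed_farCell p h i).measurableSet
  have hSm i : MeasurableSet (S i) := hTm (measurableSet_singleton _)
  have hWfin i : μ (W i) ≠ ⊤ := by simp [W, hvol]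
  have hSfin i : μ (S i) ≠ ⊤ := by simp [S, hTmass]
  have hcell : ∀ᵐ x ∂μ, ∃ i, x ∈ W i ∧ Th x = p i ∧ ∀ j, x ∈ W j → j = i := by
    filter_upwards [ae_exists_mem_farCell_unique p h hnull] with x ⟨i, hi, hunique⟩
    refine ⟨i, hi, hTh i x ⟨hi, ?_⟩, hunique⟩
    simpa using fun j hj hxj => hj (hunique j hxj)
  have hpt : ∀ᵐ x ∂μ, ⟪x, Th x⟫ + ∑ i, (W i).indicator (fun _ => h i) x
      ≤ ⟪x, T x⟫ + ∑ i, (S i).indicator (fun _ => h i) x := by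
    filter_upwards [hcell] with x ⟨i, hi, hThx, hunique⟩
    obtain ⟨j, hj⟩ := hTr x
    have hxj : x ∈ S j := hj
    rw [hThx, hj, Finset.sum_indicator_const_of_mem_unique h hi hunique,
      Finset.sum_indicator_const_of_mem_unique h hxj fun k hk => hp (hk.symm.trans hj)]
    exact inner_add_le_of_mem_farCell p h hi j
  have hmass : ∑ i, μ.real (W i) * h i = ∑ i, μ.real (S i) * h i := by
    simp only [measureReal_def, W, S, hvol, hTmass]
  have hThi := hμ1.inner_of_ae_mem_range p hThm (hcell.mono fun x ⟨i, _, hi, _⟩ => ⟨i, hi⟩)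
  have hTi := hμ1.inner_of_ae_mem_range p hTm (ae_of_all _ hTr)
  have hWi := integrable_sum_indicator_const hWm hWfin h
  have hSi := integrable_sum_indicator_const hSm hSfin h
  have hmono := integral_mono_ae (hThi.add hWi) (hTi.add hSi) hpt
  simp only [Pi.add_apply] at hmono
  rw [integral_add hThi hWi, integral_add hTi hSi, integral_sum_indicator_const hWm hWfin,
    integral_sum_indicator_const hSm hSfin, hmass] at hmono
  linarith

theorem stmt_11 {d n : ℕ}
    (μ : Measure (EuclideanSpace ℝ (Fin d))) [IsFiniteMeasure μ]
    (hμ1 : Integrable (fun x => ‖x‖) μ)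
    (p : Fin n → EuclideanSpace ℝ (Fin d)) (hp : Function.Injective p)
    (ν : Fin n → ℝ) (hν : ∀ i, 0 < ν i)
    (h : Fin n → ℝ)
    (hvol : ∀ i, μ (farCell p h i) = ENNReal.ofReal (ν i))
    (hnull : ∀ i j, i ≠ j → μ (farCell p h i ∩ farCell p h j) = 0)
    (Th : EuclideanSpace ℝ (Fin d) → EuclideanSpace ℝ (Fin d))
    (hThm : Measurable Th)
    (hTh : ∀ i, ∀ x ∈ farCell p h i \ ⋃ j ∈ ({i}ᶜ : Set (Fin n)), farCell p h j, Th x = p i) :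
    ∀ T : EuclideanSpace ℝ (Fin d) → EuclideanSpace ℝ (Fin d),
      Measurable T → (∀ x, ∃ i, T x = p i) →
      (∀ i, μ (T ⁻¹' {p i}) = ENNReal.ofReal (ν i)) →
      ∫ x, ⟪x, Th x⟫ ∂μ ≤ ∫ x, ⟪x, T x⟫ ∂μ :=
  stmt_11_general μ hμ1 p hp ν h hvol hnull Th hThm hTh
end

section
/- Maximality characterization: let μ be a finite Borel measure on ℝ^d with finite first moment, p₁, …, pₙ ∈ ℝ^d pairwise distinct, and ν₁, …, νₙ > 0. Suppose h* ∈ ℝⁿ satisfies μ(Wᵢ(h*)) = νᵢ for all i, where Wᵢ(h*) are the farthest power cells, and the pairwise intersections Wᵢ(h*) ∩ Wⱼ(h*), i ≠ j, are μ-null. Then h* is a global maximizer of the semi-discrete dual energy E(h) = ∫ minᵢ (⟪pᵢ, x⟫ + hᵢ) dμ(x) − Σᵢ νᵢ hᵢ over ℝⁿ. -/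
open MeasureTheory Finset
open scoped RealInnerProductSpace

/-!
Write `u_h x = minᵢ (⟪pᵢ, x⟫ + hᵢ)`. On the cell `Wᵢ(h*)` the minimum defining `u_{h*}` is attained
at `i`, so `u_h - u_{h*} ≤ hᵢ - h*ᵢ` there. The cells cover `ℝ^d` and overlap only on null sets,
hence `∫ (u_h - u_{h*}) dμ ≤ Σᵢ μ(Wᵢ(h*)) (hᵢ - h*ᵢ) = Σᵢ νᵢ (hᵢ - h*ᵢ)`, i.e. `E h ≤ E h*`.
-/

section Integration

variable {α ι : Type*} [MeasurableSpace α] {μ : Measure α}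

theorem integrable_finset_inf' {s : Finset ι} (hs : s.Nonempty) {f : ι → α → ℝ}
    (hf : ∀ i ∈ s, Integrable (f i) μ) :
    Integrable (fun x => s.inf' hs fun i => f i x) μ := by
  refine (Finset.inf'_induction (p := fun g : α → ℝ => Integrable g μ) hs f
    (fun _ hg _ hk => hg.inf hk) hf).congr (ae_of_all _ fun x => ?_)
  exact Finset.inf'_apply hs f x

theorem integral_le_sum_of_ae_partition [Fintype ι] [IsFiniteMeasure μ] {W : ι → Set α}
    (hW : ∀ i, MeasurableSet (W i)) (hdisj : Pairwise (Function.onFun (AEDisjoint μ) W))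
    (hcover : ⋃ i, W i = Set.univ) {f : α → ℝ} (hf : Integrable f μ) {c : ι → ℝ}
    (hle : ∀ i, ∀ x ∈ W i, f x ≤ c i) :
    ∫ x, f x ∂μ ≤ ∑ i, μ.real (W i) * c i := by
  have hsplit : ∫ x, f x ∂μ = ∑ i, ∫ x in W i, f x ∂μ := by
    have := hasSum_integral_iUnion_ae (fun i => (hW i).nullMeasurableSet) hdisj
      (by rw [hcover]; exact hf.integrableOn)
    rw [hcover, Measure.restrict_univ] at this
    exact this.unique (hasSum_fintype _)
  rw [hsplit]
  refine Finset.sum_le_sum fun i _ => ?_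
  calc ∫ x in W i, f x ∂μ ≤ ∫ _ in W i, c i ∂μ :=
        setIntegral_mono_on hf.integrableOn (integrableOn_const (measure_ne_top μ _)) (hW i)
          (hle i)
    _ = μ.real (W i) * c i := by rw [setIntegral_const, smul_eq_mul]

end Integration

theorem integrable_inner_add_const {E : Type*} [NormedAddCommGroup E] [InnerProductSpace ℝ E]
    [MeasurableSpace E] [OpensMeasurableSpace E] {μ : Measure E} [IsFiniteMeasure μ]
    (hμ : Integrable (fun x => ‖x‖) μ) (a : E) (c : ℝ) :
    Integrable (fun x => ⟪a, x⟫ + c) μ := by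
  refine (Integrable.mono' (hμ.const_mul ‖a‖) ?_ ?_).add (integrable_const c)
  · exact (continuous_const.inner continuous_id).aestronglyMeasurable
  · filter_upwards with x
    simpa using norm_inner_le_norm (𝕜 := ℝ) a x

section FarCell

variable {d n : ℕ} (p : Fin n → EuclideanSpace ℝ (Fin d))

theorem measurableSet_farCell (h : Fin n → ℝ) (i : Fin n) : MeasurableSet (farCell p h i) := by
  have hcont : ∀ j, Continuous fun x : EuclideanSpace ℝ (Fin d) => ⟪p j, x⟫ + h j :=
    fun j => (continuous_const.inner continuous_id).add continuous_const
  simp only [farCell, Set.ofPred_forall]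
  exact MeasurableSet.iInter fun j => measurableSet_le (hcont i).measurable (hcont j).measurable

theorem iUnion_farCell [NeZero n] (h : Fin n → ℝ) : ⋃ i, farCell p h i = Set.univ := by
  refine Set.eq_univ_of_forall fun x => Set.mem_iUnion.2 ?_
  obtain ⟨i, -, hi⟩ := Finset.exists_mem_eq_inf' univ_nonempty (fun i => ⟪p i, x⟫ + h i)
  exact ⟨i, fun j => hi ▸ Finset.inf'_le _ (mem_univ j)⟩

theorem inf'_sub_inf'_le_of_mem_farCell [NeZero n] (h h' : Fin n → ℝ) {i : Fin n}
    {x : EuclideanSpace ℝ (Fin d)} (hx : x ∈ farCell p h' i) :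
    (univ.inf' univ_nonempty fun j => ⟪p j, x⟫ + h j) -
        (univ.inf' univ_nonempty fun j => ⟪p j, x⟫ + h' j) ≤ h i - h' i := by
  have hle : (univ.inf' univ_nonempty fun j => ⟪p j, x⟫ + h j) ≤ ⟪p i, x⟫ + h i :=
    Finset.inf'_le _ (mem_univ i)
  have heq : (univ.inf' univ_nonempty fun j => ⟪p j, x⟫ + h' j) = ⟪p i, x⟫ + h' i :=
    le_antisymm (Finset.inf'_le _ (mem_univ i)) (Finset.le_inf' _ _ fun j _ => hx j)
  linarith

end FarCell

theorem stmt_16_general {d n : ℕ} [NeZero n]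
    (μ : Measure (EuclideanSpace ℝ (Fin d))) [IsFiniteMeasure μ]
    (hμ1 : Integrable (fun x => ‖x‖) μ)
    (p : Fin n → EuclideanSpace ℝ (Fin d))
    (ν : Fin n → ℝ) (hν : ∀ i, 0 < ν i)
    (hstar : Fin n → ℝ)
    (hvol : ∀ i, μ (farCell p hstar i) = ENNReal.ofReal (ν i))
    (hnull : ∀ i j, i ≠ j → μ (farCell p hstar i ∩ farCell p hstar j) = 0)
    (E : (Fin n → ℝ) → ℝ)
    (hE : ∀ h : Fin n → ℝ,
      E h = (∫ x, Finset.univ.inf' Finset.univ_nonempty (fun i => ⟪p i, x⟫ + h i) ∂μ)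
              - ∑ i, ν i * h i) :
    ∀ h : Fin n → ℝ, E h ≤ E hstar := by
  intro h
  have hint : ∀ g : Fin n → ℝ,
      Integrable (fun x => univ.inf' univ_nonempty fun i => ⟪p i, x⟫ + g i) μ :=
    fun g => integrable_finset_inf' _ fun i _ => integrable_inner_add_const hμ1 (p i) (g i)
  have hreal : ∀ i, μ.real (farCell p hstar i) = ν i := fun i => by
    rw [measureReal_def, hvol i, ENNReal.toReal_ofReal (hν i).le]
  have hgain := integral_le_sum_of_ae_partition (measurableSet_farCell p hstar)
    (fun i j hij => hnull i j hij) (iUnion_farCell p hstar) ((hint h).sub (hint hstar))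
    (fun i x hx => inf'_sub_inf'_le_of_mem_farCell p h hstar hx)
  simp only [hreal, mul_sub, Pi.sub_apply, Finset.sum_sub_distrib] at hgain
  rw [hE h, hE hstar]
  linarith [integral_sub (hint h) (hint hstar)]

theorem stmt_16 {d n : ℕ} [NeZero n]
    (μ : Measure (EuclideanSpace ℝ (Fin d))) [IsFiniteMeasure μ]
    (hμ1 : Integrable (fun x => ‖x‖) μ)
    (p : Fin n → EuclideanSpace ℝ (Fin d)) (hp : Function.Injective p)
    (ν : Fin n → ℝ) (hν : ∀ i, 0 < ν i)
    (hstar : Fin n → ℝ)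
    (hvol : ∀ i, μ (farCell p hstar i) = ENNReal.ofReal (ν i))
    (hnull : ∀ i j, i ≠ j → μ (farCell p hstar i ∩ farCell p hstar j) = 0)
    (E : (Fin n → ℝ) → ℝ)
    (hE : ∀ h : Fin n → ℝ,
      E h = (∫ x, Finset.univ.inf' Finset.univ_nonempty (fun i => ⟪p i, x⟫ + h i) ∂μ)
              - ∑ i, ν i * h i) :
    ∀ h : Fin n → ℝ, E h ≤ E hstar :=
  stmt_16_general μ hμ1 p ν hν hstar hvol hnull E hE
end
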